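/- arXiv:2412.07520 — 7 statements merged into one kernel-verified Lean document; each statement's English description precedes it below -/
import Mathlib

section
/- Let $X_N \in \mathbb{R}^{N\times M}$ with $X_N X_N^\top$ invertible, $Y_N \in \mathbb{R}^N$, and $\theta_N^* = X_N^+ Y_N$ the minimum norm interpolating solution. Given a test sample $(x, y)$ with $x_\bot = (I - X_N^+ X_N)x \neq 0$, the minimum norm solution $\theta_{N+1}^*$ of the augmented system (rows of $X_N$ plus row $x^\top$, labels $Y_N$ plus $y$) satisfies $\|\theta_{N+1}^*\|^2 = \|\theta_N^*\|^2 + \frac{1}{\|x_\bot\|^2}(y - x^\top \theta_N^*)^2$. -/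
open Matrix

private lemma dot_mulVec_left {m k : ℕ} (A : Matrix (Fin m) (Fin k) ℝ)
    (u : Fin k → ℝ) (d : Fin m → ℝ) :
    (A.mulVec u) ⬝ᵥ d = u ⬝ᵥ (Aᵀ.mulVec d) := by
  rw [dotProduct_comm, dotProduct_mulVec, ← mulVec_transpose, dotProduct_comm]

/-- Recursive norm formula for the minimum norm interpolating solution: the minimum
norm solution of the augmented system (training rows plus test row `xᵀ` with label `y`)
is `θ' = θ_N^* + (y - xᵀθ_N^*)/‖x_⊥‖² · x_⊥`, and its squared norm satisfies
`‖θ'‖² = ‖θ_N^*‖² + (y - xᵀθ_N^*)²/‖x_⊥‖²`. -/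
theorem min_norm_augmented_recursion {N M : ℕ}
    (X : Matrix (Fin N) (Fin M) ℝ) (hX : IsUnit (X * Xᵀ).det)
    (Y : Fin N → ℝ)
    (Xp : Matrix (Fin M) (Fin N) ℝ) (hXp : Xp = Xᵀ * (X * Xᵀ)⁻¹)
    (θN : Fin M → ℝ) (hθN : θN = Xp.mulVec Y)
    (x : Fin M → ℝ) (y : ℝ)
    (xb : Fin M → ℝ) (hxb : xb = (1 - Xp * X).mulVec x) (hxb0 : xb ≠ 0)
    (θ' : Fin M → ℝ)
    (hθ' : θ' = θN + ((y - x ⬝ᵥ θN) / (xb ⬝ᵥ xb)) • xb) :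
    X.mulVec θ' = Y ∧ x ⬝ᵥ θ' = y ∧
      (∀ θ : Fin M → ℝ, X.mulVec θ = Y → x ⬝ᵥ θ = y → θ' ⬝ᵥ θ' ≤ θ ⬝ᵥ θ) ∧
      θ' ⬝ᵥ θ' = θN ⬝ᵥ θN + (1 / (xb ⬝ᵥ xb)) * (y - x ⬝ᵥ θN) ^ 2 := by
  have hA : (X * Xᵀ) * (X * Xᵀ)⁻¹ = 1 := Matrix.mul_nonsing_inv _ hX
  have hXXp : X * Xp = 1 := by rw [hXp, ← Matrix.mul_assoc]; exact hA
  have hAsymm : ((X * Xᵀ)⁻¹)ᵀ = (X * Xᵀ)⁻¹ := by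
    rw [Matrix.transpose_nonsing_inv, Matrix.transpose_mul, Matrix.transpose_transpose]
  have hXpT : Xpᵀ = (X * Xᵀ)⁻¹ * X := by
    rw [hXp, Matrix.transpose_mul, hAsymm, Matrix.transpose_transpose]
  -- if X d = 0 then Xpᵀ d = 0
  have key : ∀ d : Fin M → ℝ, X.mulVec d = 0 → Xpᵀ.mulVec d = 0 := by
    intro d hd
    rw [hXpT, ← Matrix.mulVec_mulVec, hd, Matrix.mulVec_zero]
  have hθNd : ∀ d : Fin M → ℝ, X.mulVec d = 0 → θN ⬝ᵥ d = 0 := by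
    intro d hd
    rw [hθN, dot_mulVec_left, key d hd, dotProduct_zero]
  -- X θN = Y
  have hXθN : X.mulVec θN = Y := by
    rw [hθN, Matrix.mulVec_mulVec, hXXp, Matrix.one_mulVec]
  -- X xb = 0
  have hXxb : X.mulVec xb = 0 := by
    rw [hxb, Matrix.mulVec_mulVec, Matrix.mul_sub, Matrix.mul_one, ← Matrix.mul_assoc,
      hXXp, Matrix.one_mul, sub_self, Matrix.zero_mulVec]
  have hd1 : θN ⬝ᵥ xb = 0 := hθNd xb hXxb
  -- P symmetric
  have hPsymm : (Xp * X)ᵀ = Xp * X := by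
    rw [Matrix.transpose_mul, hXpT, hXp, Matrix.mul_assoc]
  -- P xb = 0
  have hPxb : (Xp * X).mulVec xb = 0 := by
    rw [← Matrix.mulVec_mulVec, hXxb, Matrix.mulVec_zero]
  -- xb ⬝ xb = x ⬝ xb
  have hfix : (1 - Xp * X).mulVec xb = xb := by
    rw [Matrix.sub_mulVec, Matrix.one_mulVec, hPxb, sub_zero]
  have hd2 : xb ⬝ᵥ xb = x ⬝ᵥ xb := by
    nth_rewrite 1 [hxb]
    rw [dot_mulVec_left, Matrix.transpose_sub, Matrix.transpose_one, hPsymm, hfix]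
  have hxbxb : xb ⬝ᵥ xb ≠ 0 := fun h => hxb0 (dotProduct_self_eq_zero.mp h)
  -- xb ⬝ d = 0 for feasible increments
  have hxbd : ∀ d : Fin M → ℝ, X.mulVec d = 0 → x ⬝ᵥ d = 0 → xb ⬝ᵥ d = 0 := by
    intro d hd hxd
    rw [hxb, dot_mulVec_left, Matrix.transpose_sub, Matrix.transpose_one, hPsymm,
      Matrix.sub_mulVec, Matrix.one_mulVec, ← Matrix.mulVec_mulVec, hd,
      Matrix.mulVec_zero, sub_zero, hxd]
  set c : ℝ := (y - x ⬝ᵥ θN) / (xb ⬝ᵥ xb) with hc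
  have h1 : X.mulVec θ' = Y := by
    rw [hθ', Matrix.mulVec_add, hXθN, Matrix.mulVec_smul, hXxb, smul_zero, add_zero]
  have h2 : x ⬝ᵥ θ' = y := by
    rw [hθ', dotProduct_add, dotProduct_smul, smul_eq_mul, ← hd2, hc,
      div_mul_cancel₀ _ hxbxb]
    ring
  refine ⟨h1, h2, ?_, ?_⟩
  · intro θ hXθ hxθ
    have hd : X.mulVec (θ - θ') = 0 := by
      rw [Matrix.mulVec_sub, hXθ, h1, sub_self]
    have hxd : x ⬝ᵥ (θ - θ') = 0 := by
      rw [dotProduct_sub, hxθ, h2, sub_self]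
    have hortho : θ' ⬝ᵥ (θ - θ') = 0 := by
      nth_rewrite 1 [hθ']
      rw [add_dotProduct, smul_dotProduct, hθNd _ hd, hxbd _ hd hxd,
        smul_zero, add_zero]
    have hnn : (θ - θ') ⬝ᵥ (θ - θ') ≥ 0 := by
      apply Finset.sum_nonneg
      intro i _
      exact mul_self_nonneg _
    have hexp : θ ⬝ᵥ θ = θ' ⬝ᵥ θ' + 2 * (θ' ⬝ᵥ (θ - θ')) + (θ - θ') ⬝ᵥ (θ - θ') := by
      have h := sub_add_cancel θ θ'
      calc θ ⬝ᵥ θ = (θ' + (θ - θ')) ⬝ᵥ (θ' + (θ - θ')) := by rw [add_sub_cancel]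
        _ = θ' ⬝ᵥ θ' + 2 * (θ' ⬝ᵥ (θ - θ')) + (θ - θ') ⬝ᵥ (θ - θ') := by
            rw [add_dotProduct, dotProduct_add, dotProduct_add,
              dotProduct_comm (θ - θ') θ']
            ring
    rw [hexp, hortho]
    linarith
  · rw [hθ', add_dotProduct, dotProduct_add, dotProduct_add]
    simp only [smul_dotProduct, dotProduct_smul, smul_eq_mul]
    rw [hd1, dotProduct_comm xb θN, hd1, mul_zero, add_zero, zero_add,
      hc, div_mul_cancel₀ _ hxbxb]
    ring
end

section
/- Let $A = X_N^\top X_N$ be positive semidefinite, $\lambda > 0$, $P_\lambda = (A + \lambda I)^{-1}$, and define the ridge solution $\hat{\theta}_\lambda = P_\lambda X_N^\top Y_N$ and $K_\lambda = 1 + x^\top P_\lambda x$. Then the minimizer $\hat{\theta}_y$ of $\sum_{n=1}^N(y_n - \theta^\top x_n)^2 + (y - \theta^\top x)^2 + \lambda\|\theta\|^2$ equals $\hat{\theta}_\lambda + \frac{P_\lambda x}{K_\lambda}(y - \hat{\theta}_\lambda^\top x)$, and its residual on the test point satisfies $(y - \hat{\theta}_y^\top x)^2 = \frac{1}{K_\lambda^2}(y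 - \hat{\theta}_\lambda^\top x)^2$. -/
/-!
The genie estimate `θy` is the Sherman–Morrison (recursive least squares) update of the ridge
solution `θlam` by the test sample. Writing `B = XᵀX + λI`, we have `B θlam = XᵀY` and
`B (P x) = x`, so `B θy = XᵀY + c x` with `c = K⁻¹ (y - θlamᵀx)`; moreover `θy` misses the test
label by exactly `c`. Together these are the normal equations of the regularized loss with the
test sample appended, and a convex quadratic is minimized where its gradient vanishes.
-/

open Matrix

namespace Matrix

variable {m n : Type*} [Fintype m] [Fintype n]

lemma sub_mulVec_add_dotProduct_self (X : Matrix m n ℝ) (Y : m → ℝ) (θ d : n → ℝ) :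
    (Y - X *ᵥ (θ + d)) ⬝ᵥ (Y - X *ᵥ (θ + d)) =
      (Y - X *ᵥ θ) ⬝ᵥ (Y - X *ᵥ θ) - 2 * ((Xᵀ *ᵥ (Y - X *ᵥ θ)) ⬝ᵥ d) +
        (X *ᵥ d) ⬝ᵥ (X *ᵥ d) := by
  rw [mulVec_transpose, ← dotProduct_mulVec, mulVec_add, ← sub_sub]
  simp only [sub_dotProduct, dotProduct_sub, dotProduct_comm (X *ᵥ d)]
  ring

end Matrix

section RidgeRegression

variable {m n : Type*} [Fintype m] [Fintype n]

theorem ridge_loss_le_of_normal_eq (X : Matrix m n ℝ) (Y : m → ℝ) (x : n → ℝ) (y : ℝ)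
    {lam : ℝ} (hlam : 0 ≤ lam) {θ₀ : n → ℝ}
    (hnormal : Xᵀ *ᵥ (Y - X *ᵥ θ₀) + (y - θ₀ ⬝ᵥ x) • x = lam • θ₀) (θ : n → ℝ) :
    (Y - X *ᵥ θ₀) ⬝ᵥ (Y - X *ᵥ θ₀) + (y - θ₀ ⬝ᵥ x) ^ 2 + lam * (θ₀ ⬝ᵥ θ₀) ≤
      (Y - X *ᵥ θ) ⬝ᵥ (Y - X *ᵥ θ) + (y - θ ⬝ᵥ x) ^ 2 + lam * (θ ⬝ᵥ θ) := by
  obtain ⟨d, rfl⟩ : ∃ d, θ = θ₀ + d := ⟨θ - θ₀, by abel⟩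
  have hgrad : (Xᵀ *ᵥ (Y - X *ᵥ θ₀)) ⬝ᵥ d + (y - θ₀ ⬝ᵥ x) * (x ⬝ᵥ d) = lam * (θ₀ ⬝ᵥ d) := by
    simpa only [add_dotProduct, smul_dotProduct, smul_eq_mul] using congrArg (· ⬝ᵥ d) hnormal
  have hXd : 0 ≤ (X *ᵥ d) ⬝ᵥ (X *ᵥ d) := by simpa using dotProduct_self_star_nonneg (X *ᵥ d)
  have hd : 0 ≤ d ⬝ᵥ d := by simpa using dotProduct_self_star_nonneg d
  rw [sub_mulVec_add_dotProduct_self]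
  simp only [add_dotProduct, dotProduct_add, dotProduct_comm d θ₀, dotProduct_comm d x]
  nlinarith [sq_nonneg (x ⬝ᵥ d), mul_nonneg hlam hd]

lemma rls_residual {P : Matrix n n ℝ} {x θlam θy : n → ℝ} {y K : ℝ}
    (hK : K = 1 + x ⬝ᵥ P *ᵥ x) (hK0 : K ≠ 0)
    (hθy : θy = θlam + (K⁻¹ * (y - θlam ⬝ᵥ x)) • P *ᵥ x) :
    y - θy ⬝ᵥ x = K⁻¹ * (y - θlam ⬝ᵥ x) := by
  have hPx : P *ᵥ x ⬝ᵥ x = K - 1 := by rw [hK, dotProduct_comm]; ring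
  rw [hθy, add_dotProduct, smul_dotProduct, smul_eq_mul, hPx]
  field_simp
  ring

theorem rls_normal_eq [DecidableEq n] (X : Matrix m n ℝ) (Y : m → ℝ) (x : n → ℝ) (y lam : ℝ)
    {P : Matrix n n ℝ} (hP : (Xᵀ * X + lam • 1) * P = 1) {θlam θy : n → ℝ} {K : ℝ}
    (hθlam : θlam = P *ᵥ (Xᵀ *ᵥ Y)) (hK : K = 1 + x ⬝ᵥ P *ᵥ x) (hK0 : K ≠ 0)
    (hθy : θy = θlam + (K⁻¹ * (y - θlam ⬝ᵥ x)) • P *ᵥ x) :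
    Xᵀ *ᵥ (Y - X *ᵥ θy) + (y - θy ⬝ᵥ x) • x = lam • θy := by
  set B := Xᵀ * X + lam • (1 : Matrix n n ℝ)
  have hBP (v : n → ℝ) : B *ᵥ (P *ᵥ v) = v := by rw [mulVec_mulVec, hP, one_mulVec]
  have hBθy : Xᵀ *ᵥ (X *ᵥ θy) + lam • θy = Xᵀ *ᵥ Y + (K⁻¹ * (y - θlam ⬝ᵥ x)) • x :=
    calc Xᵀ *ᵥ (X *ᵥ θy) + lam • θy = B *ᵥ θy := by
          rw [add_mulVec, mulVec_mulVec, smul_mulVec, one_mulVec]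
      _ = Xᵀ *ᵥ Y + (K⁻¹ * (y - θlam ⬝ᵥ x)) • x := by
          rw [hθy, mulVec_add, mulVec_smul, hθlam, hBP, hBP]
  rw [rls_residual hK hK0 hθy, mulVec_sub]
  linear_combination (norm := module) -hBθy

end RidgeRegression

/-- Ridge regression recursive least squares with an appended test sample: the
minimizer of the regularized loss is `θ_λ + (P_λ x / K_λ)(y - θ_λᵀx)` and the
test residual shrinks by the factor `1/K_λ²`. -/
theorem ridge_genie_rls {N M : ℕ}
    (X : Matrix (Fin N) (Fin M) ℝ) (Y : Fin N → ℝ)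
    (x : Fin M → ℝ) (y : ℝ) (lam : ℝ) (hlam : 0 < lam)
    (Plam : Matrix (Fin M) (Fin M) ℝ)
    (hPlam : Plam = (Xᵀ * X + lam • (1 : Matrix (Fin M) (Fin M) ℝ))⁻¹)
    (θlam : Fin M → ℝ) (hθlam : θlam = Plam.mulVec (Xᵀ.mulVec Y))
    (Klam : ℝ) (hKlam : Klam = 1 + x ⬝ᵥ Plam.mulVec x)
    (θy : Fin M → ℝ)
    (hθy : θy = θlam + (Klam⁻¹ * (y - θlam ⬝ᵥ x)) • Plam.mulVec x) :
    (∀ θ : Fin M → ℝ,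
      (Y - X.mulVec θy) ⬝ᵥ (Y - X.mulVec θy) + (y - θy ⬝ᵥ x) ^ 2 + lam * (θy ⬝ᵥ θy) ≤
        (Y - X.mulVec θ) ⬝ᵥ (Y - X.mulVec θ) + (y - θ ⬝ᵥ x) ^ 2 + lam * (θ ⬝ᵥ θ)) ∧
      (y - θy ⬝ᵥ x) ^ 2 = (1 / Klam ^ 2) * (y - θlam ⬝ᵥ x) ^ 2 := by
  have hB : (Xᵀ * X + lam • (1 : Matrix (Fin M) (Fin M) ℝ)).PosDef := by
    have hXX : (Xᵀ * X).PosSemidef := by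
      simpa only [conjTranspose_eq_transpose_of_trivial] using posSemidef_conjTranspose_mul_self X
    exact .posSemidef_add hXX (PosDef.one.smul hlam)
  have hBP : (Xᵀ * X + lam • 1) * Plam = 1 :=
    hPlam ▸ mul_nonsing_inv _ ((isUnit_iff_isUnit_det _).mp hB.isUnit)
  have hK0 : Klam ≠ 0 := by
    have hxPx : 0 ≤ x ⬝ᵥ Plam *ᵥ x := by
      simpa using (hPlam ▸ hB.posSemidef.inv).dotProduct_mulVec_nonneg x
    linarith
  refine ⟨ridge_loss_le_of_normal_eq X Y x y hlam.le
    (rls_normal_eq X Y x y lam hBP hθlam hKlam hK0 hθy), ?_⟩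
  rw [rls_residual hKlam hK0 hθy]
  field_simp
end

section
/- The LpNML predictive distribution for ridge regression, obtained by normalizing $y \mapsto \frac{c}{\sqrt{2\pi\sigma^2}}\exp\{-\frac{1}{2\hat{\sigma}^2}(y - \hat{\theta}_\lambda^\top x + \hat{\mu})^2\}$ over $y \in \mathbb{R}$, is the Gaussian density with mean $\hat{\theta}_\lambda^\top x - \hat{\mu}$ and variance $\hat{\sigma}^2$, where $\hat{\mu} = \frac{\lambda K_\lambda \hat{\theta}_\lambda^\top P_\lambda x}{1 + \lambda x^\top P_\lambda^2 x}$ and $\hat{\sigma}^2 = \frac{\sigma^2 K_\lambda^2}{1 + \lambda x^\top P_\lambda^2 x}$; moreover the normalization constant equals $c\sqrt{\hat{\sigma}^2/\sigma^2} = c\, K_\lambda/\sqrt{1 + \lambda x^\top P_\lambda^2 x}$. -/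
/-!
The regularized Gram matrix `XᵀX + λI` is positive definite, hence so is its inverse `P_λ`, which
makes `K_λ = 1 + xᵀP_λx` and `1 + λ xᵀP_λ²x` positive and `σ̂² > 0`. The function `f` is then
`c / √(2πσ²)` times an unnormalized Gaussian density with mean `θ_λᵀx - μ̂` and variance `σ̂²`, whose
integral is `√(2πσ̂²)`; dividing by it leaves the Gaussian density, and
`σ̂² / σ² = K_λ² / (1 + λ xᵀP_λ²x)` gives the second form of the normalization constant.
-/

open Matrix Real ProbabilityTheory

theorem Matrix.posDef_transpose_mul_self_add_smul_one {m n : Type*} [Fintype m] [Fintype n]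
    [DecidableEq n] (X : Matrix m n ℝ) {lam : ℝ} (hlam : 0 < lam) :
    (Xᵀ * X + lam • (1 : Matrix n n ℝ)).PosDef := by
  refine PosDef.posSemidef_add ?_ ?_
  · simpa using posSemidef_conjTranspose_mul_self X
  · simpa [smul_one_eq_diagonal] using posDef_diagonal_iff.mpr fun _ : n => hlam

theorem Matrix.IsHermitian.dotProduct_mul_self_mulVec_nonneg {n : Type*} [Fintype n]
    {P : Matrix n n ℝ} (hP : P.IsHermitian) (x : n → ℝ) : 0 ≤ x ⬝ᵥ (P * P) *ᵥ x := by
  have h := (posSemidef_conjTranspose_mul_self P).dotProduct_mulVec_nonneg x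
  rw [hP.eq] at h
  simpa using h

theorem mul_exp_neg_sq_div_eq_mul_gaussianPDFReal (a m : ℝ) {v : ℝ} (hv : 0 < v) (y : ℝ) :
    a * exp (-(y - m) ^ 2 / (2 * v)) = a * √(2 * π * v) * gaussianPDFReal m v.toNNReal y := by
  have : 0 < √(2 * π * v) := by positivity
  rw [gaussianPDFReal, Real.coe_toNNReal v hv.le]
  field_simp

theorem integral_mul_exp_neg_sq_div (a m : ℝ) {v : ℝ} (hv : 0 < v) :
    ∫ y, a * exp (-(y - m) ^ 2 / (2 * v)) = a * √(2 * π * v) := by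
  simp_rw [mul_exp_neg_sq_div_eq_mul_gaussianPDFReal a m hv, MeasureTheory.integral_const_mul,
    integral_gaussianPDFReal_eq_one m (Real.toNNReal_pos.mpr hv).ne', mul_one]

theorem mul_exp_neg_sq_div_div_integral {a : ℝ} (ha : a ≠ 0) (m : ℝ) {v : ℝ} (hv : 0 < v)
    (y : ℝ) :
    a * exp (-(y - m) ^ 2 / (2 * v)) / ∫ y', a * exp (-(y' - m) ^ 2 / (2 * v)) =
      (√(2 * π * v))⁻¹ * exp (-(y - m) ^ 2 / (2 * v)) := by
  have : 0 < √(2 * π * v) := by positivity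
  rw [integral_mul_exp_neg_sq_div a m hv]
  field_simp

theorem lpnml_predictive_distribution_general {N M : ℕ} (σ : ℝ) (hσ : 0 < σ)
    (X : Matrix (Fin N) (Fin M) ℝ)
    (x : Fin M → ℝ) (lam : ℝ) (hlam : 0 < lam) (c : ℝ) (hc : 0 < c)
    (Plam : Matrix (Fin M) (Fin M) ℝ)
    (hPlam : Plam = (Xᵀ * X + lam • (1 : Matrix (Fin M) (Fin M) ℝ))⁻¹)
    (θlam : Fin M → ℝ)
    (Klam : ℝ) (hKlam : Klam = 1 + x ⬝ᵥ Plam.mulVec x)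
    (B : ℝ) (hB : B = 1 + lam * (x ⬝ᵥ (Plam * Plam).mulVec x))
    (μh : ℝ)
    (σh2 : ℝ) (hσh2 : σh2 = σ ^ 2 * Klam ^ 2 / B)
    (f : ℝ → ℝ)
    (hf : f = fun y => c / Real.sqrt (2 * Real.pi * σ ^ 2) *
      Real.exp (-(y - θlam ⬝ᵥ x + μh) ^ 2 / (2 * σh2))) :
    (∫ y : ℝ, f y) = c * Real.sqrt (σh2 / σ ^ 2) ∧
      c * Real.sqrt (σh2 / σ ^ 2) = c * Klam / Real.sqrt B ∧
      (∀ y : ℝ, f y / (∫ y' : ℝ, f y') =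
        (Real.sqrt (2 * Real.pi * σh2))⁻¹ *
          Real.exp (-(y - (θlam ⬝ᵥ x - μh)) ^ 2 / (2 * σh2))) := by
  have hP : Plam.PosDef := hPlam ▸ (posDef_transpose_mul_self_add_smul_one X hlam).inv
  have hK : 0 < Klam := by
    have := hP.posSemidef.dotProduct_mulVec_nonneg x
    simp only [star_trivial] at this
    linarith
  have hB0 : 0 < B := by
    have := hP.isHermitian.dotProduct_mul_self_mulVec_nonneg x
    rw [hB]
    positivity
  have hσh2_pos : 0 < σh2 := hσh2 ▸ by positivity
  have hf' : f = fun y => c / √(2 * π * σ ^ 2) *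
      exp (-(y - (θlam ⬝ᵥ x - μh)) ^ 2 / (2 * σh2)) := by
    simp only [hf, sub_add]
  have hvariance_ratio : σh2 / σ ^ 2 = Klam ^ 2 / B := by
    rw [hσh2]
    field_simp
  have hint : ∫ y, f y = c * √(σh2 / σ ^ 2) := by
    have hscale : √(2 * π * σh2) = √(2 * π * σ ^ 2) * √(σh2 / σ ^ 2) := by
      rw [← sqrt_mul (by positivity)]
      field_simp
    have : 0 < √(2 * π * σ ^ 2) := by positivity
    rw [hf', integral_mul_exp_neg_sq_div _ _ hσh2_pos, hscale]
    field_simp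
  refine ⟨hint, ?_, fun y => ?_⟩
  · rw [hvariance_ratio, sqrt_div (sq_nonneg _), sqrt_sq hK.le, mul_div_assoc]
  · rw [hf']
    exact mul_exp_neg_sq_div_div_integral (by positivity) _ hσh2_pos y

/-- Normalizing the luckiness-weighted genie density gives the LpNML predictive
distribution: a Gaussian with mean `θ_λᵀx - μ̂` and variance `σ̂²`, and the
normalization constant equals `c·√(σ̂²/σ²) = c·K_λ/√B`. -/
theorem lpnml_predictive_distribution {N M : ℕ} (σ : ℝ) (hσ : 0 < σ)
    (X : Matrix (Fin N) (Fin M) ℝ) (Y : Fin N → ℝ)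
    (x : Fin M → ℝ) (lam : ℝ) (hlam : 0 < lam) (c : ℝ) (hc : 0 < c)
    (Plam : Matrix (Fin M) (Fin M) ℝ)
    (hPlam : Plam = (Xᵀ * X + lam • (1 : Matrix (Fin M) (Fin M) ℝ))⁻¹)
    (θlam : Fin M → ℝ) (hθlam : θlam = Plam.mulVec (Xᵀ.mulVec Y))
    (Klam : ℝ) (hKlam : Klam = 1 + x ⬝ᵥ Plam.mulVec x)
    (B : ℝ) (hB : B = 1 + lam * (x ⬝ᵥ (Plam * Plam).mulVec x))
    (μh : ℝ) (hμh : μh = lam * Klam * (θlam ⬝ᵥ Plam.mulVec x) / B)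
    (σh2 : ℝ) (hσh2 : σh2 = σ ^ 2 * Klam ^ 2 / B)
    (f : ℝ → ℝ)
    (hf : f = fun y => c / Real.sqrt (2 * Real.pi * σ ^ 2) *
      Real.exp (-(y - θlam ⬝ᵥ x + μh) ^ 2 / (2 * σh2))) :
    (∫ y : ℝ, f y) = c * Real.sqrt (σh2 / σ ^ 2) ∧
      c * Real.sqrt (σh2 / σ ^ 2) = c * Klam / Real.sqrt B ∧
      (∀ y : ℝ, f y / (∫ y' : ℝ, f y') =
        (Real.sqrt (2 * Real.pi * σh2))⁻¹ *
          Real.exp (-(y - (θlam ⬝ᵥ x - μh)) ^ 2 / (2 * σh2))) :=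
  lpnml_predictive_distribution_general σ hσ X x lam hlam c hc Plam hPlam θlam Klam hKlam B hB μh
    σh2 hσh2 f hf
end

section
/- Consider a single layer softmax network with parameters $\{\theta_j\}_{j=1}^C$ and ERM probabilities $p_j = e^{\theta_j^\top x}/S$ where $S = \sum_{j'=1}^C e^{\theta_{j'}^\top x}$. Suppose the parameter vector of class $c$ is updated to $\theta_c + g(z - \theta_c^\top x)$ with $z = \ln S$ and $g \in \mathbb{R}^M$. Then the updated softmax probability of class $c$ equals $\frac{p_c}{p_c + p_c^{x^\top g}(1 - p_c)}$. -/
open Matrix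

/-- Genie prediction for the single-layer softmax network: updating the parameter
of class `c` to `θ_c + g(z - θ_cᵀx)` with `z = ln S` yields updated softmax
probability `p_c / (p_c + p_c^{xᵀg}(1 - p_c))`. -/
theorem softmax_genie_update {C M : ℕ}
    (θ : Fin C → Fin M → ℝ) (x g : Fin M → ℝ) (c : Fin C)
    (S : ℝ) (hS : S = ∑ j, Real.exp (θ j ⬝ᵥ x))
    (p : Fin C → ℝ) (hp : p = fun j => Real.exp (θ j ⬝ᵥ x) / S)
    (z : ℝ) (hz : z = Real.log S)
    (θc' : Fin M → ℝ) (hθc' : θc' = θ c + (z - θ c ⬝ᵥ x) • g) :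
    Real.exp (θc' ⬝ᵥ x) /
        ((∑ j ∈ Finset.univ.erase c, Real.exp (θ j ⬝ᵥ x)) + Real.exp (θc' ⬝ᵥ x)) =
      p c / (p c + (p c) ^ (x ⬝ᵥ g) * (1 - p c)) := by
  have hSpos : 0 < S := by
    rw [hS]
    exact Finset.sum_pos (fun j _ => Real.exp_pos _) ⟨c, Finset.mem_univ c⟩
  set a := x ⬝ᵥ g with ha
  have hpc : p c = Real.exp (θ c ⬝ᵥ x) / S := by rw [hp]
  have hpcpos : 0 < p c := by rw [hpc]; positivity
  have hpcle : p c ≤ 1 := by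
    rw [hpc, div_le_one hSpos, hS]
    exact Finset.single_le_sum (f := fun j => Real.exp (θ j ⬝ᵥ x))
      (fun j _ => (Real.exp_pos _).le) (Finset.mem_univ c)
  have hlog : Real.log (p c) = θ c ⬝ᵥ x - Real.log S := by
    rw [hpc, Real.log_div (Real.exp_pos _).ne' hSpos.ne', Real.log_exp]
  have hdot : θc' ⬝ᵥ x = θ c ⬝ᵥ x + (z - θ c ⬝ᵥ x) * a := by
    rw [hθc', add_dotProduct, smul_dotProduct, smul_eq_mul, dotProduct_comm g x, ha]
  have hexp : Real.exp (θc' ⬝ᵥ x) = S * p c * (p c) ^ (-a) := by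
    rw [hdot, Real.exp_add, Real.rpow_def_of_pos hpcpos, hz, hlog]
    rw [hpc]
    field_simp
    ring_nf
  have herase : ∑ j ∈ Finset.univ.erase c, Real.exp (θ j ⬝ᵥ x) = S * (1 - p c) := by
    rw [Finset.sum_erase_eq_sub (Finset.mem_univ c), ← hS, hpc]
    field_simp
  have hrp : (0:ℝ) < (p c) ^ (-a) := Real.rpow_pos_of_pos hpcpos _
  have hrpa : (0:ℝ) < (p c) ^ a := Real.rpow_pos_of_pos hpcpos _
  have hmul : (p c) ^ (-a) * (p c) ^ a = 1 := by
    rw [← Real.rpow_add hpcpos]; simp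
  have hden1 : S * (1 - p c) + S * p c * (p c) ^ (-a) ≠ 0 := by
    have : 0 < S * (1 - p c) + S * p c * (p c) ^ (-a) := by
      have h1 : 0 ≤ S * (1 - p c) := by
        apply mul_nonneg hSpos.le; linarith
      have h2 : 0 < S * p c * (p c) ^ (-a) := by positivity
      linarith
    exact this.ne'
  have hden2 : p c + (p c) ^ a * (1 - p c) ≠ 0 := by
    have : 0 < p c + (p c) ^ a * (1 - p c) := by
      have : 0 ≤ (p c) ^ a * (1 - p c) := by
        apply mul_nonneg hrpa.le; linarith
      linarith
    exact this.ne'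
  rw [hexp, herase]
  rw [div_eq_div_iff hden1 hden2, Real.rpow_neg hpcpos.le]
  field_simp
  ring
end

section
/- Let $p_1, \dots, p_C \in (0,1]$ with $\sum_{i=1}^C p_i = 1$ and define $\Gamma(t) = \log \sum_{i=1}^C \frac{p_i}{p_i + p_i^t (1 - p_i)}$ for $t \in [0,1]$. Then $\Gamma(0) = 0$, $\Gamma$ is non-decreasing in $t$, and $\Gamma(1) = \log \sum_{i=1}^C \frac{1}{2 - p_i}$. -/
/-- The single-layer NN pNML regret `Γ(t) = log ∑ p_i/(p_i + p_i^t(1-p_i))`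
vanishes at `t = 0`, is non-decreasing on `[0,1]`, and equals
`log ∑ 1/(2 - p_i)` at `t = 1`. -/
theorem pnml_regret_monotone {C : ℕ} (p : Fin C → ℝ)
    (hp : ∀ i, 0 < p i ∧ p i ≤ 1) (hsum : ∑ i, p i = 1)
    (Γ : ℝ → ℝ)
    (hΓ : Γ = fun t => Real.log (∑ i, p i / (p i + (p i) ^ t * (1 - p i)))) :
    Γ 0 = 0 ∧ (∀ s t : ℝ, 0 ≤ s → s ≤ t → t ≤ 1 → Γ s ≤ Γ t) ∧
      Γ 1 = Real.log (∑ i, 1 / (2 - p i)) := by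
  subst hΓ
  have hden : ∀ (i : Fin C) (t : ℝ), 0 < p i + (p i) ^ t * (1 - p i) := by
    intro i t
    have h1 := (hp i).1
    have h2 := (hp i).2
    have : 0 < (p i) ^ t := Real.rpow_pos_of_pos h1 t
    nlinarith
  refine ⟨?_, ?_, ?_⟩
  · simp only [Real.rpow_zero, one_mul]
    have : ∀ i : Fin C, p i / (p i + (1 - p i)) = p i := by
      intro i; simp
    rw [Finset.sum_congr rfl fun i _ => this i, hsum, Real.log_one]
  · intro s t hs hst ht
    rcases Nat.eq_zero_or_pos C with hC | hC
    · subst hC; simp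
    have hpos : 0 < ∑ i, p i / (p i + (p i) ^ s * (1 - p i)) := by
      apply Finset.sum_pos
      · intro i _
        exact div_pos (hp i).1 (hden i s)
      · have := Fin.pos_iff_nonempty.mp hC
        exact Finset.univ_nonempty
    apply Real.log_le_log hpos
    apply Finset.sum_le_sum
    intro i _
    have h1 := (hp i).1
    have h2 := (hp i).2
    have hrp : (p i) ^ t ≤ (p i) ^ s :=
      Real.rpow_le_rpow_of_exponent_ge h1 h2 hst
    have : p i + (p i) ^ t * (1 - p i) ≤ p i + (p i) ^ s * (1 - p i) := by
      nlinarith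
    exact div_le_div_of_nonneg_left h1.le (hden i t) this
  · simp only [Real.rpow_one]
    congr 1
    apply Finset.sum_congr rfl
    intro i _
    have h1 := (hp i).1
    rw [show p i + p i * (1 - p i) = p i * (2 - p i) by ring]
    rw [div_mul_eq_div_div, div_self h1.ne']
end

section
/- Let $\Theta$ be a hypothesis set, and for each test label $y$ let $\hat{\theta}_y$ maximize $p_\theta(y|x) w(\theta) \prod_{n} p_\theta(y_n|x_n)$ over $\theta \in \Theta$, where $w: \Theta \to (0,\infty)$ is a luckiness function. Suppose $K = \sum_{y' \in \mathcal{Y}} p_{\hat{\theta}_{y'}}(y'|x) w(\hat{\theta}_{y'}) < \infty$ (finite label alphabet $\mathcal{Y}$) and define $q(y|x) = p_{\hat{\theta}_y}(y|x) w(\hat{\theta}_y)/K$. Then $q$ is a valid probability assignment and achieves regret $R(q, y) = \log \frac{p_{\hat{\theta}_y}(y|x) w(\hat{\theta}_y)}{q(y|x)} = \log K$ for every $y$; moreover, any other probability assignment $q'$ has $\max_y R(q', y) \geq \log K$, so $q$ is the min-max optimal learner. -/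
/-- The LpNML min-max theorem: the normalized luckiness-weighted genie assignment
`q` is a valid probability assignment achieving constant regret `log K`, and any
other probability assignment has worst-case regret at least `log K`. -/
theorem lpnml_minmax {Y Θ : Type*} [Fintype Y] [Nonempty Y]
    (p : Θ → Y → ℝ) (w : Θ → ℝ) (L : Θ → ℝ)
    (hw : ∀ θ, 0 < w θ) (hpos : ∀ θ y, 0 < p θ y)
    (θhat : Y → Θ)
    (hmax : ∀ y θ, p θ y * w θ * L θ ≤ p (θhat y) y * w (θhat y) * L (θhat y))
    (K : ℝ) (hK : K = ∑ y, p (θhat y) y * w (θhat y))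
    (q : Y → ℝ) (hq : q = fun y => p (θhat y) y * w (θhat y) / K) :
    (∑ y, q y) = 1 ∧
      (∀ y, Real.log (p (θhat y) y * w (θhat y)) - Real.log (q y) = Real.log K) ∧
      (∀ q' : Y → ℝ, (∀ y, 0 < q' y) → (∑ y, q' y) = 1 →
        ∃ y, Real.log K ≤ Real.log (p (θhat y) y * w (θhat y)) - Real.log (q' y)) := by
  have hterm : ∀ y : Y, 0 < p (θhat y) y * w (θhat y) := fun y =>
    mul_pos (hpos _ y) (hw _)
  have hKpos : 0 < K := by
    rw [hK]; exact Finset.sum_pos (fun y _ => hterm y) Finset.univ_nonempty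
  have hsum : (∑ y, q y) = 1 := by
    rw [hq]
    rw [← Finset.sum_div, ← hK, div_self hKpos.ne']
  refine ⟨hsum, ?_, ?_⟩
  · intro y
    rw [hq]
    simp only
    rw [Real.log_div (hterm y).ne' hKpos.ne']
    ring
  · intro q' hq'pos hq'sum
    by_contra h
    push_neg at h
    have hlt : ∀ y : Y, q y < q' y := by
      intro y
      have hy := h y
      have hqy : 0 < q y := by rw [hq]; exact div_pos (hterm y) hKpos
      have : Real.log (p (θhat y) y * w (θhat y)) - Real.log (q' y) < Real.log K := hy
      have hlog : Real.log (p (θhat y) y * w (θhat y)) - Real.log K < Real.log (q' y) := by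
        linarith
      have hqeq : Real.log (q y) = Real.log (p (θhat y) y * w (θhat y)) - Real.log K := by
        rw [hq]; simp only; rw [Real.log_div (hterm y).ne' hKpos.ne']
      rw [← hqeq] at hlog
      exact (Real.log_lt_log_iff hqy (hq'pos y)).mp hlog
    have : (1:ℝ) < 1 := by
      calc (1:ℝ) = ∑ y, q y := hsum.symm
        _ < ∑ y, q' y := Finset.sum_lt_sum_of_nonempty Finset.univ_nonempty
            (fun y _ => hlt y)
        _ = 1 := hq'sum
    exact lt_irrefl 1 this
end

section
/- Let $q_{pNML}(y|x) = \frac{1-x^\top P_N x}{\sqrt{2\pi\sigma^2}} \exp\{-\frac{(1 - x^\top P_N x)^2}{2\sigma^2}(y - \mu)^2\}$ with $0 < x^\top P_N x < 1$ and $\mu = x^\top \theta_N$. Then $q_{pNML}(\cdot|x)$ is the density of a Gaussian with mean $\mu$ and variance $\sigma^2/(1 - x^\top P_N x)^2 = \sigma^2(1 + x^\top(X^\top X)^{-1}x)^2$; in particular it integrates to 1 and its variance exceeds the noise variance $\sigma^2$ by the factor $K^2$ where $\log K$ is the pNML regret. -/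
open Matrix Real ProbabilityTheory

/-! The pNML factor `1 - t` is `K⁻¹` with `K = 1 + xᵀ(XᵀX)⁻¹x`, because `t = xᵀP_Nx = c / (1 + c)`
for `c = xᵀ(XᵀX)⁻¹x`. Multiplying a Gaussian density of variance `σ²` by `K⁻¹` while scaling its
exponent by `K⁻²` gives exactly the Gaussian density of variance `σ²K²`, so `q` integrates to 1. -/

lemma integral_gaussian_density_eq_one (m : ℝ) {v : ℝ} (hv : 0 < v) :
    ∫ y, (√(2 * π * v))⁻¹ * rexp (-(y - m) ^ 2 / (2 * v)) = 1 := by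
  simpa [gaussianPDFReal_def, Real.coe_toNNReal _ hv.le] using
    integral_gaussianPDFReal_eq_one m (Real.toNNReal_pos.2 hv).ne'

lemma gaussian_density_rescale {σ a : ℝ} (hσ : σ ≠ 0) (ha : 0 < a) (m y : ℝ) :
    a / √(2 * π * σ ^ 2) * rexp (-(a ^ 2 / (2 * σ ^ 2)) * (y - m) ^ 2) =
      (√(2 * π * (σ ^ 2 / a ^ 2)))⁻¹ * rexp (-(y - m) ^ 2 / (2 * (σ ^ 2 / a ^ 2))) := by
  have hsqrt : √(2 * π * (σ ^ 2 / a ^ 2)) = √(2 * π * σ ^ 2) / a := by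
    rw [← mul_div_assoc, sqrt_div (by positivity), sqrt_sq ha.le]
  have hexponent : -(a ^ 2 / (2 * σ ^ 2)) * (y - m) ^ 2 = -(y - m) ^ 2 / (2 * (σ ^ 2 / a ^ 2)) := by
    field_simp
  rw [hsqrt, inv_div, hexponent]

lemma one_sub_inv_one_add_mul_self {K : Type*} [Field K] {c : K} (h : (1 + c)⁻¹ * c ≠ 0) :
    1 - (1 + c)⁻¹ * c = (1 + c)⁻¹ := by
  have hc : 1 + c ≠ 0 := by
    rintro hc
    simp [hc] at h
  field_simp
  ring

theorem pnml_predictive_is_gaussian_general {N M : ℕ} (σ : ℝ) (hσ : 0 < σ)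
    (X : Matrix (Fin N) (Fin M) ℝ)
    (x : Fin M → ℝ)
    (PN : Matrix (Fin M) (Fin M) ℝ)
    (hPN : PN = (1 + x ⬝ᵥ (Xᵀ * X)⁻¹.mulVec x)⁻¹ • (Xᵀ * X)⁻¹)
    (t : ℝ) (ht : t = x ⬝ᵥ PN.mulVec x) (ht0 : 0 < t) (ht1 : t < 1)
    (μ : ℝ)
    (q : ℝ → ℝ)
    (hq : q = fun y => (1 - t) / Real.sqrt (2 * Real.pi * σ ^ 2) *
      Real.exp (-((1 - t) ^ 2 / (2 * σ ^ 2)) * (y - μ) ^ 2)) :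
    (∫ y : ℝ, q y) = 1 ∧
      (∀ y : ℝ, q y = (Real.sqrt (2 * Real.pi * (σ ^ 2 / (1 - t) ^ 2)))⁻¹ *
        Real.exp (-(y - μ) ^ 2 / (2 * (σ ^ 2 / (1 - t) ^ 2)))) ∧
      σ ^ 2 / (1 - t) ^ 2 = σ ^ 2 * (1 + x ⬝ᵥ (Xᵀ * X)⁻¹.mulVec x) ^ 2 ∧
      σ ^ 2 < σ ^ 2 / (1 - t) ^ 2 := by
  have ht_eq : t = (1 + x ⬝ᵥ (Xᵀ * X)⁻¹ *ᵥ x)⁻¹ * (x ⬝ᵥ (Xᵀ * X)⁻¹ *ᵥ x) := by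
    rw [ht, hPN, smul_mulVec, dotProduct_smul, smul_eq_mul]
  have h1t : 0 < 1 - t := sub_pos.2 ht1
  have hK : 1 - t = (1 + x ⬝ᵥ (Xᵀ * X)⁻¹ *ᵥ x)⁻¹ := by
    rw [ht_eq] at ht0 ⊢
    exact one_sub_inv_one_add_mul_self ht0.ne'
  subst hq
  have hdensity (y : ℝ) := gaussian_density_rescale hσ.ne' h1t μ y
  refine ⟨?_, hdensity, ?_, ?_⟩
  · rw [MeasureTheory.integral_congr_ae (.of_forall hdensity)]
    exact integral_gaussian_density_eq_one μ (by positivity)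
  · rw [hK, inv_pow, div_inv_eq_mul]
  · have hsq : (1 - t) ^ 2 < 1 := pow_lt_one₀ h1t.le (by linarith) two_ne_zero
    exact (lt_div_iff₀ (by positivity)).2 (mul_lt_of_lt_one_right (by positivity) hsq)

/-- The pNML predictive distribution for under-parameterized linear regression is
a Gaussian with the ERM mean and variance inflated by the factor `K²`:
it integrates to 1, equals the Gaussian density of mean `μ = xᵀθ_N` and variance
`σ²/(1 - xᵀP_Nx)² = σ²(1 + xᵀ(XᵀX)⁻¹x)²`, which strictly exceeds `σ²`. -/
theorem pnml_predictive_is_gaussian {N M : ℕ} (σ : ℝ) (hσ : 0 < σ)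
    (X : Matrix (Fin N) (Fin M) ℝ) (hX : IsUnit (Xᵀ * X).det)
    (x θN : Fin M → ℝ)
    (PN : Matrix (Fin M) (Fin M) ℝ)
    (hPN : PN = (1 + x ⬝ᵥ (Xᵀ * X)⁻¹.mulVec x)⁻¹ • (Xᵀ * X)⁻¹)
    (t : ℝ) (ht : t = x ⬝ᵥ PN.mulVec x) (ht0 : 0 < t) (ht1 : t < 1)
    (μ : ℝ) (hμ : μ = x ⬝ᵥ θN)
    (q : ℝ → ℝ)
    (hq : q = fun y => (1 - t) / Real.sqrt (2 * Real.pi * σ ^ 2) *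
      Real.exp (-((1 - t) ^ 2 / (2 * σ ^ 2)) * (y - μ) ^ 2)) :
    (∫ y : ℝ, q y) = 1 ∧
      (∀ y : ℝ, q y = (Real.sqrt (2 * Real.pi * (σ ^ 2 / (1 - t) ^ 2)))⁻¹ *
        Real.exp (-(y - μ) ^ 2 / (2 * (σ ^ 2 / (1 - t) ^ 2)))) ∧
      σ ^ 2 / (1 - t) ^ 2 = σ ^ 2 * (1 + x ⬝ᵥ (Xᵀ * X)⁻¹.mulVec x) ^ 2 ∧
      σ ^ 2 < σ ^ 2 / (1 - t) ^ 2 :=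
  pnml_predictive_is_gaussian_general σ hσ X x PN hPN t ht ht0 ht1 μ q hq
end
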